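/- arXiv:0808.1599 — 5 statements merged into one kernel-verified Lean document; each statement's English description precedes it below -/
import Mathlib

section
/- If λ > 1, then the equation θ = 1 - e^{-θλ} has exactly one solution θ in the open interval (0,1), and 0 is also a solution; hence the largest solution θ_λ of θ - (1 - e^{-θλ}) = 0 satisfies 0 < θ_λ < 1. -/
/-!
The map `g θ = 1 - e^{-θλ}` is strictly concave and fixes `0`, so the slope `g θ / θ` of its
chord from the origin is strictly decreasing; hence `g` has at most one positive fixed point.
Since `e^{-x} ≤ 1 / (1 + x)`, the graph of `g` lies above the diagonal on `(0, 1 - 1/λ)`,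
while `g 1 < 1`; the intermediate value theorem supplies the fixed point in `(0, 1)`.
-/

open Real Set Function

theorem StrictConcaveOn.eq_of_isFixedPt {𝕜 : Type*} [Field 𝕜] [LinearOrder 𝕜]
    [IsStrictOrderedRing 𝕜] {s : Set 𝕜} {f : 𝕜 → 𝕜} (hf : StrictConcaveOn 𝕜 s f) {a x y : 𝕜}
    (ha : a ∈ s) (hx : x ∈ s) (hy : y ∈ s) (hfa : IsFixedPt f a) (hfx : IsFixedPt f x)
    (hfy : IsFixedPt f y) (hxa : x ≠ a) (hya : y ≠ a) : x = y := by
  have slope_eq_one : ∀ z, z ≠ a → IsFixedPt f z → (f z - f a) / (z - a) = 1 := fun z hza hfz => by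
    rw [hfz, hfa, div_self (sub_ne_zero.2 hza)]
  by_contra hne
  rcases lt_or_gt_of_ne hne with hxy | hyx
  · have := hf.secant_strict_mono ha hx hy hxa hya hxy
    rw [slope_eq_one x hxa hfx, slope_eq_one y hya hfy] at this
    exact lt_irrefl _ this
  · have := hf.secant_strict_mono ha hy hx hya hxa hyx
    rw [slope_eq_one x hxa hfx, slope_eq_one y hya hfy] at this
    exact lt_irrefl _ this

theorem strictConcaveOn_one_sub_exp_neg_mul {lam : ℝ} (hlam : lam ≠ 0) :
    StrictConcaveOn ℝ univ (fun θ : ℝ => 1 - exp (-θ * lam)) := by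
  refine ⟨convex_univ, fun x _ y _ hxy a b ha hb hab => ?_⟩
  have hne : -x * lam ≠ -y * lam := by simpa [hlam] using hxy
  have := strictConvexOn_exp.2 (mem_univ _) (mem_univ _) hne ha hb hab
  simp only [smul_eq_mul] at this ⊢
  have hlin : a * (-x * lam) + b * (-y * lam) = -(a * x + b * y) * lam := by ring
  rw [hlin] at this
  nlinarith

theorem lt_one_sub_exp_neg_mul {θ lam : ℝ} (hθ : 0 < θ) (hlam : 0 < lam)
    (h : θ * lam < lam - 1) : θ < 1 - exp (-θ * lam) := by
  have hθ1 : θ < 1 := by nlinarith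
  have hexp : 1 + θ * lam ≤ exp (θ * lam) := by linarith [add_one_le_exp (θ * lam)]
  have hinv : exp (-θ * lam) * exp (θ * lam) = 1 := by
    rw [← exp_add, neg_mul, neg_add_cancel, exp_zero]
  -- `e^{-θλ} ≤ 1 / (1 + θλ)`, and `θλ / (1 + θλ) > θ` exactly when `θλ < λ - 1`
  nlinarith [exp_pos (θ * lam), exp_pos (-θ * lam)]

theorem exists_mem_Ioo_eq_one_sub_exp_neg_mul {lam : ℝ} (hlam : 1 < lam) :
    ∃ θ ∈ Ioo (0 : ℝ) 1, θ = 1 - exp (-θ * lam) := by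
  set c := (lam - 1) / (2 * lam)
  have hc0 : 0 < c := div_pos (by linarith) (by linarith)
  have hc1 : c < 1 := (div_lt_one (by linarith)).2 (by linarith)
  have hc : c < 1 - exp (-c * lam) :=
    lt_one_sub_exp_neg_mul hc0 (by linarith) (by rw [div_mul_eq_mul_div, div_lt_iff₀] <;> nlinarith)
  have h1 : 1 - exp (-1 * lam) < 1 := by linarith [exp_pos (-1 * lam)]
  have hcont : ContinuousOn (fun θ : ℝ => 1 - exp (-θ * lam) - θ) (Icc c 1) := by fun_prop
  obtain ⟨θ, ⟨hcθ, hθ1⟩, hθ⟩ : (0 : ℝ) ∈ (fun θ : ℝ => 1 - exp (-θ * lam) - θ) '' Ioo c 1 :=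
    intermediate_value_Ioo' hc1.le hcont ⟨by linarith, by linarith⟩
  exact ⟨θ, ⟨hc0.trans hcθ, hθ1⟩, by linarith [show 1 - exp (-θ * lam) - θ = 0 from hθ]⟩

/-- For `λ > 1`, the equation `θ = 1 - e^{-θλ}` has exactly one solution in `(0,1)`,
and `θ = 0` is also a solution; hence the largest solution `θ_λ` lies in `(0,1)`. -/
theorem unique_positive_root (lam : ℝ) (hlam : 1 < lam) :
    (∃! θ : ℝ, θ ∈ Set.Ioo (0 : ℝ) 1 ∧ θ = 1 - Real.exp (-θ * lam)) ∧
    (0 : ℝ) = 1 - Real.exp (-(0 : ℝ) * lam) := by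
  have hzero : (0 : ℝ) = 1 - exp (-(0 : ℝ) * lam) := by simp
  obtain ⟨θ, hθ, hθfix⟩ := exists_mem_Ioo_eq_one_sub_exp_neg_mul hlam
  refine ⟨⟨θ, ⟨hθ, hθfix⟩, fun y ⟨hy, hyfix⟩ => ?_⟩, hzero⟩
  exact (strictConcaveOn_one_sub_exp_neg_mul (by linarith)).eq_of_isFixedPt (mem_univ 0)
    (mem_univ y) (mem_univ θ) hzero.symm hyfix.symm hθfix.symm hy.1.ne' hθ.1.ne'
end

section
/- The function g(t) = H(t) + 2(1-t) H(1/(2(1-t))) + (1+t) ln((1+t)/3) + ((1-2t)/2) ln((1-2t)/3) satisfies g(t) < -0.02 for all t ∈ [0, 1/2], where H(x) = -x ln x - (1-x) ln(1-x) is the natural-log binary entropy (with the conventions H(0)=H(1)=0 and the terms involving (1-2t)ln(1-2t) interpreted as 0 at t = 1/2). -/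
/-- Natural-log binary entropy, `H(x) = -x ln x - (1-x) ln(1-x)`
(with `Real.log 0 = 0`, so `H(0) = H(1) = 0` automatically). -/
noncomputable def Hent (x : ℝ) : ℝ := -x * Real.log x - (1 - x) * Real.log (1 - x)

/-- The function `g` from the satisfiability bound. -/
noncomputable def gfun (t : ℝ) : ℝ :=
  Hent t + 2 * (1 - t) * Hent (1 / (2 * (1 - t)))
    + (1 + t) * Real.log ((1 + t) / 3) + ((1 - 2 * t) / 2) * Real.log ((1 - 2 * t) / 3)

/-!
On `[0, 1/2]`, `g` is a signed sum of the terms `x ln x` for `x = t, 1 - t, 1 + t, 1 - 2t`, plus an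
affine function of `t`. Each `x ln x` with a minus sign is bounded below by a tangent line of the
convex function `x ln x`, each one with a plus sign is bounded above via `ln x ≤ ln a + x/a - 1`.
The resulting upper bound is a convex quadratic in `t`, so on an interval it suffices to check it at
the two endpoints. Taking the anchor points `a` of the form `2^i 3^j`, these checks are linear in
`ln 2` and `ln 3`; five intervals suffice, the maximum of `g` being about `-0.02235`.
-/

open Real Set

lemma gfun_eq_of_mem_Icc {t : ℝ} (ht : t ∈ Icc (0 : ℝ) (1 / 2)) :
    gfun t = -(t * log t) + (1 - t) * log (1 - t) + (1 + t) * log (1 + t)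
      - (1 - 2 * t) * log (1 - 2 * t) / 2 + (2 - 2 * t) * log 2 - 3 / 2 * log 3 := by
  obtain ⟨h0, h2⟩ := ht
  rcases h2.eq_or_lt with rfl | h2
  · norm_num [gfun, Hent, one_div, log_inv, log_div]
    ring
  have h1t : 1 - t ≠ 0 := by linarith
  have h12t : 1 - 2 * t ≠ 0 := by linarith
  have hlog_half : log (1 / (2 * (1 - t))) = -(log 2 + log (1 - t)) := by
    rw [one_div, log_inv, log_mul two_ne_zero h1t]
  have hlog_compl : log (1 - 1 / (2 * (1 - t))) = log (1 - 2 * t) - (log 2 + log (1 - t)) := by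
    rw [show 1 - 1 / (2 * (1 - t)) = (1 - 2 * t) / (2 * (1 - t)) by field_simp; ring,
      log_div h12t (by positivity), log_mul two_ne_zero h1t]
  rw [gfun, Hent, Hent, hlog_half, hlog_compl, log_div (by linarith) three_ne_zero,
    log_div h12t three_ne_zero]
  field_simp
  ring

lemma tangent_le_mul_log {a x : ℝ} (ha : 0 < a) (hx : 0 ≤ x) :
    (log a + 1) * x - a ≤ x * log x := by
  rcases hx.eq_or_lt with rfl | hx
  · simpa using ha.le
  have h := log_le_sub_one_of_pos (div_pos ha hx)
  rw [log_div ha.ne' hx.ne', le_sub_iff_add_le] at h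
  have : x * (a / x) = a := mul_div_cancel₀ a hx.ne'
  nlinarith [mul_le_mul_of_nonneg_left h hx.le]

lemma mul_log_le_quadratic {a x : ℝ} (ha : 0 < a) (hx : 0 ≤ x) :
    x * log x ≤ (log a - 1) * x + x ^ 2 / a := by
  rcases hx.eq_or_lt with rfl | hx
  · simp
  have h := log_le_sub_one_of_pos (div_pos hx ha)
  rw [log_div hx.ne' ha.ne'] at h
  have : x * (x / a) = x ^ 2 / a := by ring
  nlinarith [mul_le_mul_of_nonneg_left h hx.le]

/-- Anchors `p, s`: tangent lines for `x ln x` at `x = t, 1 - 2t`; anchors `q, r`: quadratic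
bounds at `x = 1 - t, 1 + t`. -/
noncomputable def gfunBound (p q r s t : ℝ) : ℝ :=
  -((log p + 1) * t - p) + ((log q - 1) * (1 - t) + (1 - t) ^ 2 / q)
    + ((log r - 1) * (1 + t) + (1 + t) ^ 2 / r) - ((log s + 1) * (1 - 2 * t) - s) / 2
    + (2 - 2 * t) * log 2 - 3 / 2 * log 3

lemma gfun_le_gfunBound {p q r s t : ℝ} (hp : 0 < p) (hq : 0 < q) (hr : 0 < r) (hs : 0 < s)
    (ht : t ∈ Icc (0 : ℝ) (1 / 2)) : gfun t ≤ gfunBound p q r s t := by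
  have h₁ := tangent_le_mul_log hp ht.1
  have h₂ := mul_log_le_quadratic hq (x := 1 - t) (by linarith [ht.2])
  have h₃ := mul_log_le_quadratic hr (x := 1 + t) (by linarith [ht.1])
  have h₄ := tangent_le_mul_log hs (x := 1 - 2 * t) (by linarith [ht.2])
  rw [gfun_eq_of_mem_Icc ht, gfunBound]
  linarith

lemma convexOn_gfunBound {p q r s : ℝ} (hq : 0 < q) (hr : 0 < r) :
    ConvexOn ℝ univ (gfunBound p q r s) := by
  refine ⟨convex_univ, fun x _ y _ a b ha hb hab => ?_⟩
  have key : a • gfunBound p q r s x + b • gfunBound p q r s y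
      - gfunBound p q r s (a • x + b • y) = a * b * (x - y) ^ 2 * (1 / q + 1 / r) := by
    obtain rfl : b = 1 - a := by linarith
    simp only [gfunBound, smul_eq_mul]
    field_simp
    ring
  have : 0 ≤ a * b * (x - y) ^ 2 * (1 / q + 1 / r) := by positivity
  linarith

/-- The number `2^i 3^j`, whose logarithm is known as precisely as `log 2` and `log 3`. -/
noncomputable def anchor (e : ℤ × ℤ) : ℝ := 2 ^ e.1 * 3 ^ e.2

lemma anchor_pos (e : ℤ × ℤ) : 0 < anchor e := by
  unfold anchor
  positivity

lemma log_anchor (e : ℤ × ℤ) : log (anchor e) = e.1 * log 2 + e.2 * log 3 := by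
  rw [anchor, log_mul (by positivity) (by positivity), log_zpow, log_zpow]

lemma gfun_lt_of_mem_Icc {l u t : ℝ} (p q r s : ℤ × ℤ) (hl : 0 ≤ l) (hu : u ≤ 1 / 2)
    (ht : t ∈ Icc l u)
    (h_l : gfunBound (anchor p) (anchor q) (anchor r) (anchor s) l < -0.02)
    (h_u : gfunBound (anchor p) (anchor q) (anchor r) (anchor s) u < -0.02) :
    gfun t < -0.02 :=
  calc gfun t ≤ gfunBound _ _ _ _ t :=
        gfun_le_gfunBound (anchor_pos p) (anchor_pos q) (anchor_pos r) (anchor_pos s)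
          ⟨hl.trans ht.1, ht.2.trans hu⟩
    _ ≤ max _ _ :=
        (convexOn_gfunBound (anchor_pos q) (anchor_pos r)).le_max_of_mem_Icc
          (mem_univ _) (mem_univ _) ht
    _ < -0.02 := max_lt h_l h_u

/-- `g(t) < -0.02` for all `t ∈ [0, 1/2]`. -/
theorem gfun_lt : ∀ t ∈ Set.Icc (0 : ℝ) (1 / 2), gfun t < -0.02 := by
  rintro t ⟨h0, h2⟩
  have := log_two_gt_d9
  have := log_two_lt_d9
  have := log_three_gt_d9
  have := log_three_lt_d9
  rcases le_total t (3 / 32) with h | h₁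
  · refine gfun_lt_of_mem_Icc (2, -4) (3, -2) (-3, 2) (-5, 3) le_rfl (by norm_num)
      ⟨h0, h⟩ ?_ ?_ <;> simp only [gfunBound, log_anchor] <;> norm_num [anchor] <;> linarith
  rcases le_total t (3 / 16) with h | h₂
  · refine gfun_lt_of_mem_Icc (-9, 4) (6, -4) (5, -3) (1, -1) (by norm_num) (by norm_num)
      ⟨h₁, h⟩ ?_ ?_ <;> simp only [gfunBound, log_anchor] <;> norm_num [anchor] <;> linarith
  rcases le_total t (15 / 64) with h | h₃
  · refine gfun_lt_of_mem_Icc (1, -2) (6, -4) (5, -3) (-4, 2) (by norm_num) (by norm_num)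
      ⟨h₂, h⟩ ?_ ?_ <;> simp only [gfunBound, log_anchor] <;> norm_num [anchor] <;> linarith
  rcases le_total t (21 / 64) with h | h₄
  · refine gfun_lt_of_mem_Icc (-2, 0) (-2, 1) (-6, 4) (-9, 5) (by norm_num) (by norm_num)
      ⟨h₃, h⟩ ?_ ?_ <;> simp only [gfunBound, log_anchor] <;> norm_num [anchor] <;> linarith
  refine gfun_lt_of_mem_Icc (-3, 1) (-7, 4) (2, -1) (-4, 1) (by norm_num) le_rfl
    ⟨h₄, h2⟩ ?_ ?_ <;> simp only [gfunBound, log_anchor] <;> norm_num [anchor] <;> linarith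
end

section
/- Let Y and Z be disjoint finite sets of clones with |Y| ≥ |Z| and |Y| + |Z| even. In a uniformly random perfect matching on Y ∪ Z, the probability that every element of Z is matched to an element of Y is Π_{i=0}^{|Z|-1} (|Y| - i)/(|Y| + |Z| - 1 - 2i), and this probability is at least 2^{-|Z|}. -/
/-!
A perfect matching of a finite set `S` is encoded as an involution of the ambient type whose
non-fixed points are exactly `S`. Conditioning on the partner `v` of a point `u` and composing
with the transposition `(u v)` identifies such matchings with the perfect matchings of
`S \ {u, v}`. Hence a set of size `2n` has `(2n - 1)‼` perfect matchings, and, when every point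
of `Z` must be matched outside `Z`, the partners of the points of `Z` can be chosen one at a time
in `|Y|, |Y| - 1, …` ways, leaving a perfect matching of the `|Y| - |Z|` unused points of `Y`.
Comparing the two counts gives the product; each of its factors is at least `1/2`.
-/

open Classical Finset

/-- A perfect matching on a finite type: a fixed-point-free involution. -/
def IsPM {α : Type*} (f : α → α) : Prop :=
  Function.Involutive f ∧ ∀ a, f a ≠ a

section Arithmetic

open Nat

theorem descFactorial_mul_doubleFactorial_div_doubleFactorial (k n : ℕ) :
    (((k + 2 * n).descFactorial k * (2 * n - 1)‼ : ℕ) : ℝ) / ((2 * (k + n) - 1)‼ : ℕ) =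
      ∏ i ∈ range k,
        (((k + 2 * n : ℕ) : ℝ) - i) / (((k + 2 * n : ℕ) : ℝ) + k - 1 - 2 * i) := by
  induction k with
  | zero => simp [(doubleFactorial_pos _).ne']
  | succ k ih =>
    rw [prod_range_succ', show k + 1 + 2 * n = k + 2 * n + 1 by omega, succ_descFactorial_succ,
      show 2 * (k + 1 + n) - 1 = 2 * (k + n) + 1 by omega, doubleFactorial_add_one]
    have hshift : ∀ i ∈ range k,
        (((k + 2 * n + 1 : ℕ) : ℝ) - (i + 1 : ℕ)) /
            ((k + 2 * n + 1 : ℕ) + (k + 1 : ℕ) - 1 - 2 * (i + 1 : ℕ)) =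
          (((k + 2 * n : ℕ) : ℝ) - i) / ((k + 2 * n : ℕ) + k - 1 - 2 * i) := fun i _ => by
      push_cast
      ring
    rw [prod_congr rfl hshift, ← ih, mul_assoc, Nat.cast_mul, Nat.cast_mul (2 * (k + n) + 1),
      mul_div_mul_comm, mul_comm]
    congr 1
    push_cast
    ring

theorem inv_two_pow_le_prod {k m : ℕ} (hkm : k ≤ m) :
    (2 : ℝ)⁻¹ ^ k ≤ ∏ i ∈ range k, ((m : ℝ) - i) / ((m : ℝ) + k - 1 - 2 * i) := by
  rw [show (2 : ℝ)⁻¹ ^ k = ∏ _i ∈ range k, (2 : ℝ)⁻¹ by simp]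
  refine prod_le_prod (fun _ _ => by norm_num) fun i hi => ?_
  have hik : (i : ℝ) + 1 ≤ k := by exact_mod_cast mem_range.1 hi
  have hkm' : (k : ℝ) ≤ m := by exact_mod_cast hkm
  rw [le_div_iff₀ (by linarith)]
  linarith

end Arithmetic

section Swap

open Equiv

variable {α : Type*} [DecidableEq α] {f : α → α} {u v a : α}

theorem Function.Involutive.swap_comp (hf : Function.Involutive f)
    (hσ : Equiv.swap u v ∘ f = f ∘ Equiv.swap u v) :
    Function.Involutive (Equiv.swap u v ∘ f) := fun a => by
  have h := congrFun hσ (f a)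
  simp only [Function.comp_apply] at h ⊢
  rw [← h, hf a, swap_apply_self]

theorem swap_apply_ne_self_iff_of_ne (hu : a ≠ u) (hv : a ≠ v) :
    swap u v (f a) ≠ a ↔ f a ≠ a := by
  rw [Ne, swap_apply_eq_iff, swap_apply_of_ne_of_ne hu hv]

end Swap

noncomputable section Matchings

open Equiv Nat

variable {α : Type*} [Fintype α] [DecidableEq α]

def perfectMatchings (S : Finset α) : Finset (α → α) :=
  {f | Function.Involutive f ∧ ∀ a, f a ≠ a ↔ a ∈ S}

def matchingsOutOf (S Z : Finset α) : Finset (α → α) :=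
  {f ∈ perfectMatchings S | ∀ z ∈ Z, f z ∉ Z}

variable {S Y Z : Finset α} {f g : α → α} {u v : α}

theorem mem_perfectMatchings :
    f ∈ perfectMatchings S ↔ Function.Involutive f ∧ ∀ a, f a ≠ a ↔ a ∈ S := by
  simp [perfectMatchings]

theorem mem_matchingsOutOf :
    f ∈ matchingsOutOf S Z ↔ f ∈ perfectMatchings S ∧ ∀ z ∈ Z, f z ∉ Z := by
  simp [matchingsOutOf]

@[simp]
theorem matchingsOutOf_empty (S : Finset α) : matchingsOutOf S ∅ = perfectMatchings S := by
  simp [matchingsOutOf]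

theorem perfectMatchings_empty : perfectMatchings (∅ : Finset α) = {id} := by
  ext f
  simp only [mem_perfectMatchings, notMem_empty, iff_false, not_not, mem_singleton]
  exact ⟨fun h => funext h.2, fun h => h ▸ ⟨fun _ => rfl, fun _ => rfl⟩⟩

theorem apply_mem_of_mem_perfectMatchings (hf : f ∈ perfectMatchings S) {a : α} (ha : a ∈ S) :
    f a ∈ S := by
  rw [mem_perfectMatchings] at hf
  rw [← hf.2, hf.1 a, Ne, eq_comm, ← Ne, hf.2]
  exact ha

theorem swap_comp_mem_matchingsOutOf_erase (hvZ : v ∉ Z)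
    (hf : f ∈ matchingsOutOf S Z) (hfu : f u = v) :
    swap u v ∘ f ∈ matchingsOutOf ((S.erase u).erase v) (Z.erase u) := by
  obtain ⟨hfS, hfZ⟩ := mem_matchingsOutOf.1 hf
  obtain ⟨hinv, hfix⟩ := mem_perfectMatchings.1 hfS
  have hfv : f v = u := hfu ▸ hinv u
  have hσ : swap u v ∘ f = f ∘ swap u v := by
    rw [← hinv.injective.swap_comp, hfu, hfv, swap_comm]
  refine mem_matchingsOutOf.2 ⟨mem_perfectMatchings.2 ⟨hinv.swap_comp hσ, fun a => ?_⟩, ?_⟩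
  · by_cases hau : a = u
    · simp [hau, hfu]
    by_cases hav : a = v
    · simp [hav, hfv]
    rw [Function.comp_apply, swap_apply_ne_self_iff_of_ne hau hav, hfix]
    simp [hau, hav]
  · intro z hz
    obtain ⟨hzu, hzZ⟩ := mem_erase.1 hz
    have hfzu : f z ≠ u := fun h => hvZ (by rwa [← hfu, ← h, hinv z])
    have hfzv : f z ≠ v := fun h => hzu (hinv.injective (h.trans hfu.symm))
    rw [Function.comp_apply, swap_apply_of_ne_of_ne hfzu hfzv]
    exact fun h => hfZ z hzZ (mem_of_mem_erase h)

theorem swap_comp_mem_matchingsOutOf (hu : u ∈ S) (hv : v ∈ S) (huv : u ≠ v) (hvZ : v ∉ Z)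
    (hg : g ∈ matchingsOutOf ((S.erase u).erase v) (Z.erase u)) :
    swap u v ∘ g ∈ matchingsOutOf S Z := by
  obtain ⟨hgS, hgZ⟩ := mem_matchingsOutOf.1 hg
  obtain ⟨hinv, hfix⟩ := mem_perfectMatchings.1 hgS
  have hgu : g u = u := by simpa using hfix u
  have hgv : g v = v := by simpa using hfix v
  have hσ : swap u v ∘ g = g ∘ swap u v := by rw [← hinv.injective.swap_comp, hgu, hgv]
  refine mem_matchingsOutOf.2 ⟨mem_perfectMatchings.2 ⟨hinv.swap_comp hσ, fun a => ?_⟩, ?_⟩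
  · by_cases hau : a = u
    · simp [hau, hgu, huv.symm, hu]
    by_cases hav : a = v
    · simp [hav, hgv, huv, hv]
    rw [Function.comp_apply, swap_apply_ne_self_iff_of_ne hau hav, hfix]
    simp [hau, hav]
  · intro z hz
    by_cases hzu : z = u
    · simpa [hzu, hgu] using hvZ
    have hzv : z ≠ v := fun h => hvZ (h ▸ hz)
    have hgzu : g z ≠ u := fun h => hzu (hinv.injective (h.trans hgu.symm))
    have hgzv : g z ≠ v := fun h => hzv (hinv.injective (h.trans hgv.symm))
    rw [Function.comp_apply, swap_apply_of_ne_of_ne hgzu hgzv]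
    exact fun h => hgZ z (mem_erase.2 ⟨hzu, hz⟩) (mem_erase.2 ⟨hgzu, h⟩)

theorem card_matchingsOutOf_filter_apply_eq (hu : u ∈ S) (hv : v ∈ S) (huv : u ≠ v)
    (hvZ : v ∉ Z) :
    #{f ∈ matchingsOutOf S Z | f u = v} =
      #(matchingsOutOf ((S.erase u).erase v) (Z.erase u)) := by
  refine card_nbij' (swap u v ∘ ·) (swap u v ∘ ·) (fun f hf => ?_) (fun g hg => ?_)
    (fun f _ => ?_) (fun g _ => ?_)
  · obtain ⟨hf, hfu⟩ := mem_filter.1 hf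
    exact swap_comp_mem_matchingsOutOf_erase hvZ hf hfu
  · refine mem_filter.2 ⟨swap_comp_mem_matchingsOutOf hu hv huv hvZ hg, ?_⟩
    have hgu : g u = u := by
      simpa using (mem_perfectMatchings.1 (mem_matchingsOutOf.1 hg).1).2 u
    simp [hgu]
  all_goals funext a; exact swap_apply_self u v _

theorem card_matchingsOutOf_eq_sum (hZS : Z ⊆ S) {z : α} (hz : z ∈ Z) :
    #(matchingsOutOf S Z) =
      ∑ y ∈ S \ Z, #(matchingsOutOf ((S.erase z).erase y) (Z.erase z)) := by
  rw [card_eq_sum_card_fiberwise (f := fun f => f z) (t := S \ Z) fun f hf => ?_]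
  · refine sum_congr rfl fun y hy => ?_
    obtain ⟨hyS, hyZ⟩ := mem_sdiff.1 hy
    exact card_matchingsOutOf_filter_apply_eq (hZS hz) hyS (fun h => hyZ (h ▸ hz)) hyZ
  · obtain ⟨hfS, hfZ⟩ := mem_matchingsOutOf.1 hf
    exact mem_sdiff.2 ⟨apply_mem_of_mem_perfectMatchings hfS (hZS hz), hfZ z hz⟩

theorem card_perfectMatchings_eq_sum {a : α} (ha : a ∈ S) :
    #(perfectMatchings S) = ∑ b ∈ S.erase a, #(perfectMatchings ((S.erase a).erase b)) := by
  rw [← matchingsOutOf_empty, card_eq_sum_card_fiberwise (f := fun f => f a) (t := S.erase a)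
    fun f hf => ?_]
  · refine sum_congr rfl fun b hb => ?_
    rw [card_matchingsOutOf_filter_apply_eq ha (mem_of_mem_erase hb) (ne_of_mem_erase hb).symm
      (notMem_empty b), erase_empty, matchingsOutOf_empty]
  · rw [mem_coe, matchingsOutOf_empty] at hf
    exact mem_erase.2 ⟨((mem_perfectMatchings.1 hf).2 a).2 ha,
      apply_mem_of_mem_perfectMatchings hf ha⟩

-- For `n = 0` the truncated subtraction gives `(0 - 1)‼ = 0‼ = 1`, the empty matching.
theorem card_perfectMatchings {n : ℕ} (hS : #S = 2 * n) :
    #(perfectMatchings S) = (2 * n - 1)‼ := by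
  induction n generalizing S with
  | zero => simp [card_eq_zero.1 (by simpa using hS), perfectMatchings_empty]
  | succ n ih =>
    obtain ⟨a, ha⟩ : S.Nonempty := card_pos.1 (by omega)
    have hcard : ∀ b ∈ S.erase a, #((S.erase a).erase b) = 2 * n := fun b hb => by
      rw [card_erase_of_mem hb, card_erase_of_mem ha, hS]; omega
    rw [card_perfectMatchings_eq_sum ha, sum_congr rfl fun b hb => ih (hcard b hb), sum_const,
      card_erase_of_mem ha, hS, smul_eq_mul, show 2 * (n + 1) - 1 = 2 * n + 1 by omega,
      doubleFactorial_add_one]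

theorem card_matchingsOutOf {n : ℕ} (hZS : Z ⊆ S) (hS : #S = 2 * #Z + 2 * n) :
    #(matchingsOutOf S Z) = (#Z + 2 * n).descFactorial #Z * (2 * n - 1)‼ := by
  induction Z using Finset.induction_on generalizing S with
  | empty => simpa using card_perfectMatchings (by simpa using hS)
  | insert z Z hz ih =>
    have hzS := hZS (mem_insert_self z Z)
    have hsub : ∀ y ∈ S \ insert z Z, Z ⊆ (S.erase z).erase y := fun y hy x hx => by
      have hy := mem_sdiff.1 hy
      refine mem_erase.2 ⟨?_, mem_erase.2 ⟨?_, hZS (mem_insert_of_mem hx)⟩⟩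
      · rintro rfl; exact hy.2 (mem_insert_of_mem hx)
      · rintro rfl; exact hz hx
    have hcard : ∀ y ∈ S \ insert z Z, #((S.erase z).erase y) = 2 * #Z + 2 * n := fun y hy => by
      rw [card_erase_of_mem (mem_erase.2 ⟨?_, (mem_sdiff.1 hy).1⟩), card_erase_of_mem hzS, hS,
        card_insert_of_notMem hz]
      · omega
      · rintro rfl; exact (mem_sdiff.1 hy).2 (mem_insert_self _ _)
    rw [card_matchingsOutOf_eq_sum hZS (mem_insert_self z Z), erase_insert hz,
      sum_congr rfl fun y hy => ih (hsub y hy) (hcard y hy), sum_const, card_sdiff_of_subset hZS,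
      hS, card_insert_of_notMem hz, smul_eq_mul, show #Z + 1 + 2 * n = #Z + 2 * n + 1 by omega,
      show 2 * (#Z + 1) + 2 * n - (#Z + 1) = #Z + 2 * n + 1 by omega, succ_descFactorial_succ,
      mul_assoc]

theorem filter_isPM_eq :
    (univ : Finset (α → α)).filter (fun f => IsPM f) = perfectMatchings univ := by
  ext f
  rw [mem_filter, mem_perfectMatchings]
  simp [IsPM]

theorem filter_isPM_and_forall_mem_eq (hYZ : IsCompl Y Z) :
    (univ : Finset (α → α)).filter (fun f => IsPM f ∧ ∀ z ∈ Z, f z ∈ Y) =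
      matchingsOutOf univ Z := by
  ext f
  simp [mem_matchingsOutOf, mem_perfectMatchings, IsPM, hYZ.eq_compl]

end Matchings

/-- For disjoint `Y, Z` covering the ground set with `|Y| ≥ |Z|` and `|Y|+|Z|` even,
the probability that a uniform perfect matching matches every element of `Z` into `Y`
equals `∏_{i<|Z|} (|Y|-i)/(|Y|+|Z|-1-2i)`, which is at least `2^{-|Z|}`. -/
theorem matching_into_Y_probability {α : Type*} [Fintype α] [DecidableEq α]
    (Y Z : Finset α) (hdisj : Disjoint Y Z) (hcover : Y ∪ Z = Finset.univ)
    (hcard : Z.card ≤ Y.card) (heven : Even (Y.card + Z.card)) :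
    ((((Finset.univ : Finset (α → α)).filter
        (fun f => IsPM f ∧ ∀ z ∈ Z, f z ∈ Y)).card : ℝ) /
      (((Finset.univ : Finset (α → α)).filter (fun f => IsPM f)).card : ℝ)
      = ∏ i ∈ Finset.range Z.card,
          ((Y.card : ℝ) - i) / ((Y.card : ℝ) + Z.card - 1 - 2 * i)) ∧
    (2 : ℝ)⁻¹ ^ Z.card ≤
      ((((Finset.univ : Finset (α → α)).filter
        (fun f => IsPM f ∧ ∀ z ∈ Z, f z ∈ Y)).card : ℝ) /
      (((Finset.univ : Finset (α → α)).filter (fun f => IsPM f)).card : ℝ)) := by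
  obtain ⟨n, hn⟩ : ∃ n, #Y = #Z + 2 * n := by
    obtain ⟨r, hr⟩ := heven
    exact ⟨r - #Z, by omega⟩
  have hcardα : #(univ : Finset α) = 2 * #Z + 2 * n := by
    rw [← hcover, card_union_of_disjoint hdisj, hn]
    ring
  rw [filter_isPM_and_forall_mem_eq ⟨hdisj, codisjoint_iff.2 hcover⟩, filter_isPM_eq,
    card_matchingsOutOf (subset_univ Z) hcardα,
    card_perfectMatchings (n := #Z + n) (by rw [hcardα]; ring), hn,
    descFactorial_mul_doubleFactorial_div_doubleFactorial]
  refine ⟨rfl, ?_⟩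
  rw [← hn]
  exact inv_two_pow_le_prod hcard
end

section
/- Let N, M, L be natural numbers with L ≤ N ≤ M, N + M even, and M - N even. The number of perfect matchings on a set of N + M points, partitioned into N 'negative' and M 'positive' points with a distinguished subset of L positive points, in which every negative point is matched to a positive point and every distinguished positive point is matched to a negative point, is at most C(M - L, N - L) · N! · (M - N - 1)!!. -/
open Classical

/-- Double factorial: `df n` is the product of odd numbers up to `n`;
`df (m-1)` counts perfect matchings on `m` points. -/
def df : ℕ → ℕ
  | 0 => 1
  | 1 => 1
  | (n + 2) => (n + 2) * df n

/-! A constrained matching `f` is determined by two pieces of data: its restriction to `Neg`,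
an injection into `Pos` whose image `I` contains `Dist`, and the perfect matching it induces on
the `M - N` points of `Pos \ I`. There are at most `C(M - L, N - L)` choices for `I`, `N!`
bijections `Neg → I`, and `(M - N - 1)!!` perfect matchings of `Pos \ I`. -/

open Finset Function

section Injections

variable {α β : Type*} [DecidableEq β]

theorem card_le_descFactorial_of_injective {s : Finset α} {t : Finset β} (G : Finset (s → β))
    (hG : ∀ g ∈ G, Injective g ∧ ∀ x, g x ∈ t) : #G ≤ (#t).descFactorial #s := by
  calc #G ≤ #((univ : Finset (s ↪ t)).image fun e : s ↪ t => Subtype.val ∘ ⇑e) := by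
        refine card_le_card fun g hg => mem_image.2 ?_
        obtain ⟨hinj, hmaps⟩ := hG g hg
        exact ⟨⟨fun x => ⟨g x, hmaps x⟩, fun x y h => hinj (congrArg Subtype.val h)⟩,
          mem_univ _, rfl⟩
    _ ≤ Fintype.card (s ↪ t) := card_image_le
    _ = (#t).descFactorial #s := by rw [Fintype.card_embedding_eq, Fintype.card_coe,
          Fintype.card_coe]

theorem card_le_choose_of_superset_of_subset {D t : Finset β} (hD : D ⊆ t) {k : ℕ}
    (F : Finset (Finset β)) (hF : ∀ I ∈ F, D ⊆ I ∧ I ⊆ t ∧ #I = k) :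
    #F ≤ (#t - #D).choose (k - #D) := by
  calc #F ≤ #((t \ D).powersetCard (k - #D)) := by
        refine card_le_card_of_injOn (· \ D) (fun I hI => ?_) (fun I hI J hJ hIJ => ?_)
        · obtain ⟨hDI, hIt, hI⟩ := hF I hI
          exact mem_powersetCard.2 ⟨sdiff_subset_sdiff hIt le_rfl, by
            rw [card_sdiff_of_subset hDI, hI]⟩
        · rw [← sdiff_union_of_subset (hF I hI).1, ← sdiff_union_of_subset (hF J hJ).1]
          exact congrArg (· ∪ D) hIJ
    _ = (#t - #D).choose (k - #D) := by rw [card_powersetCard, card_sdiff_of_subset hD]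

theorem card_injective_covering_le {s : Finset α} {D t : Finset β} (hD : D ⊆ t)
    (G : Finset (s → β)) (hG : ∀ g ∈ G, Injective g ∧ (∀ x, g x ∈ t) ∧ D ⊆ univ.image g) :
    #G ≤ (#t - #D).choose (#s - #D) * (#s).factorial := by
  have hfiber : ∀ I ∈ G.image (univ.image ·), #{g ∈ G | univ.image g = I} ≤ (#s).factorial := by
    intro I hI
    obtain ⟨g₀, hg₀, rfl⟩ := mem_image.1 hI
    calc #{g ∈ G | univ.image g = univ.image g₀} ≤ (#(univ.image g₀)).descFactorial #s := by
          refine card_le_descFactorial_of_injective _ fun g hg => ?_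
          obtain ⟨hg, hgI⟩ := mem_filter.1 hg
          exact ⟨(hG g hg).1, fun x => hgI ▸ mem_image_of_mem g (mem_univ x)⟩
      _ = (#s).factorial := by
          rw [card_image_of_injective _ (hG g₀ hg₀).1, card_univ, Fintype.card_coe,
            Nat.descFactorial_self]
  calc #G ≤ (#s).factorial * #(G.image (univ.image ·)) := card_le_mul_card_image _ _ hfiber
    _ ≤ (#s).factorial * (#t - #D).choose (#s - #D) := by
        refine Nat.mul_le_mul_left _ (card_le_choose_of_superset_of_subset hD _ fun I hI => ?_)
        obtain ⟨g, hg, rfl⟩ := mem_image.1 hI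
        obtain ⟨hinj, hmaps, hDg⟩ := hG g hg
        refine ⟨hDg, fun y hy => ?_, ?_⟩
        · obtain ⟨x, -, rfl⟩ := mem_image.1 hy
          exact hmaps x
        · rw [card_image_of_injective _ hinj, card_univ, Fintype.card_coe]
    _ = _ := mul_comm _ _

end Injections

theorem df_succ (n : ℕ) : df (n + 1) = (n + 1) * df (n - 1) := by
  cases n <;> rfl

section Matchings

variable {α : Type*}

def IsPMOn (s : Finset α) (f : α → α) : Prop :=
  Involutive f ∧ ∀ x, f x = x ↔ x ∉ s

theorem IsPMOn.apply_mem {s : Finset α} {f : α → α} (hf : IsPMOn s f) {x : α} (hx : x ∈ s) :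
    f x ∈ s := by
  by_contra h
  have hfix := (hf.2 (f x)).2 h
  rw [hf.1 x] at hfix
  exact (hf.2 x).1 hfix.symm hx

theorem IsPMOn.apply_mem_erase [DecidableEq α] {s : Finset α} {f : α → α} (hf : IsPMOn s f)
    {a : α} (ha : a ∈ s) : f a ∈ s.erase a :=
  mem_erase.2 ⟨fun h => (hf.2 a).1 h ha, hf.apply_mem ha⟩

theorem IsPMOn.swap_comp [DecidableEq α] {s : Finset α} {f : α → α} (hf : IsPMOn s f)
    (a : α) : IsPMOn ((s.erase a).erase (f a)) (Equiv.swap a (f a) ∘ f) := by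
  obtain ⟨hinv, hfix⟩ := hf
  have hoff : ∀ x, x ≠ a → x ≠ f a → Equiv.swap a (f a) (f x) = f x := fun x hxa hxb =>
    Equiv.swap_apply_of_ne_of_ne (fun h => hxb (by rw [← h, hinv]))
      (fun h => hxa (hinv.injective h))
  refine ⟨fun x => ?_, fun x => ?_⟩
  · by_cases hxa : x = a
    · simp [hxa]
    by_cases hxb : x = f a
    · simp [hxb, hinv a]
    simp only [comp_apply, hoff x hxa hxb]
    rw [hoff (f x) (fun h => hxb (by rw [← h, hinv])) (fun h => hxa (hinv.injective h)), hinv]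
  · by_cases hxa : x = a
    · simp [hxa]
    by_cases hxb : x = f a
    · simp [hxb, hinv a]
    simp [hoff x hxa hxb, hxa, hxb, hfix]

variable [Fintype α] [DecidableEq α]

noncomputable def matchingsOn (s : Finset α) : Finset (α → α) := {f | IsPMOn s f}

@[simp]
theorem mem_matchingsOn {s : Finset α} {f : α → α} : f ∈ matchingsOn s ↔ IsPMOn s f := by
  simp [matchingsOn]

theorem card_matchingsOn_le (s : Finset α) : #(matchingsOn s) ≤ df (#s - 1) := by
  induction hn : #s using Nat.strong_induction_on generalizing s with
  | _ n ih =>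
  obtain rfl | ⟨a, ha⟩ := s.eq_empty_or_nonempty
  · subst hn
    calc #(matchingsOn (∅ : Finset α)) ≤ #{(id : α → α)} := by
          refine card_le_card fun f hf => mem_singleton.2 (funext fun x => ?_)
          exact ((mem_matchingsOn.1 hf).2 x).2 (notMem_empty x)
      _ = df (0 - 1) := rfl
  obtain ⟨m, rfl⟩ : ∃ m, n = m + 1 :=
    Nat.exists_eq_succ_of_ne_zero (hn ▸ (card_pos.2 ⟨a, ha⟩).ne')
  -- Sort the matchings by the partner `b` of `a`; then `swap a b ∘ f` matches `s \ {a, b}`.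
  have hfiber : ∀ b ∈ (matchingsOn s).image (· a),
      #{f ∈ matchingsOn s | f a = b} ≤ df (m - 2) := by
    intro b hb
    replace hb : b ∈ s.erase a := by
      obtain ⟨f, hf, rfl⟩ := mem_image.1 hb
      exact (mem_matchingsOn.1 hf).apply_mem_erase ha
    calc #{f ∈ matchingsOn s | f a = b} ≤ #(matchingsOn ((s.erase a).erase b)) := by
          refine card_le_card_of_injOn (Equiv.swap a b ∘ ·) (fun f hf => ?_)
            ((Equiv.swap a b).injective.comp_left.injOn)
          obtain ⟨hf, hfa⟩ := mem_filter.1 hf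
          rw [← hfa]
          exact mem_matchingsOn.2 ((mem_matchingsOn.1 hf).swap_comp a)
      _ ≤ df (m - 2) := by
          have := ih (m - 1) (by omega) _
            (by rw [card_erase_of_mem hb, card_erase_of_mem ha, hn]; rfl)
          rwa [show m - 1 - 1 = m - 2 by omega] at this
  have himage : #((matchingsOn s).image (· a)) ≤ m := by
    calc #((matchingsOn s).image (· a)) ≤ #(s.erase a) :=
          card_le_card fun b hb => by
            obtain ⟨f, hf, rfl⟩ := mem_image.1 hb
            exact (mem_matchingsOn.1 hf).apply_mem_erase ha
      _ = m := by rw [card_erase_of_mem ha, hn]; rfl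
  calc #(matchingsOn s) ≤ df (m - 2) * #((matchingsOn s).image (· a)) :=
        card_le_mul_card_image _ _ hfiber
    _ ≤ df (m - 2) * m := Nat.mul_le_mul_left _ himage
    _ ≤ df (m + 1 - 1) := by
        rcases m with _ | m
        · simp
        · rw [show m + 1 + 1 - 1 = m + 1 from rfl, df_succ, mul_comm]
          exact le_rfl

theorem isPMOn_compl_piecewise {f : α → α} (hf : IsPM f) {T : Finset α}
    (hT : ∀ x ∈ T, f x ∈ T) : IsPMOn Tᶜ (T.piecewise id f) := by
  have hfT : ∀ x ∉ T, f x ∉ T := fun x hx hfx => hx (hf.1 x ▸ hT _ hfx)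
  refine ⟨fun x => ?_, fun x => ?_⟩
  · by_cases hx : x ∈ T
    · simp [hx]
    · simp [hx, hfT x hx, hf.1 x]
  · by_cases hx : x ∈ T
    · simp [hx]
    · simp [hx, hf.2 x]

theorem card_filter_isPM_eqOn_le (s : Finset α) (f₀ : α → α) :
    #{f : α → α | IsPM f ∧ Set.EqOn f f₀ s} ≤ df (#(s ∪ s.image f₀)ᶜ - 1) := by
  -- Off `T` such an `f` is a perfect matching of `Tᶜ`; on `T` it is determined by `f₀`.
  set T := s ∪ s.image f₀
  have hT : ∀ f : α → α, IsPM f → Set.EqOn f f₀ s → ∀ x ∈ T, f x ∈ T := by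
    intro f hf hfs x hx
    rw [show T = s ∪ s.image f by rw [image_congr hfs]] at hx ⊢
    rcases mem_union.1 hx with hx | hx
    · exact mem_union_right _ (mem_image_of_mem f hx)
    · obtain ⟨y, hy, rfl⟩ := mem_image.1 hx
      exact mem_union_left _ (by rwa [hf.1 y])
  calc #{f : α → α | IsPM f ∧ Set.EqOn f f₀ s} ≤ #(matchingsOn Tᶜ) := by
        refine card_le_card_of_injOn (fun f => T.piecewise id f) (fun f hf => ?_)
          (fun f₁ hf₁ f₂ hf₂ h => ?_)
        · obtain ⟨hf, hfs⟩ := (mem_filter.1 hf).2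
          exact mem_matchingsOn.2 (isPMOn_compl_piecewise hf (hT f hf hfs))
        · obtain ⟨hf₁, hfs₁⟩ := (mem_filter.1 hf₁).2
          obtain ⟨hf₂, hfs₂⟩ := (mem_filter.1 hf₂).2
          funext x
          by_cases hxs : x ∈ s
          · rw [hfs₁ hxs, hfs₂ hxs]
          by_cases hxT : x ∈ T
          · obtain ⟨y, hy, rfl⟩ := mem_image.1 ((mem_union.1 hxT).resolve_left hxs)
            rw [← hfs₁ hy, hf₁.1, hfs₁ hy, ← hfs₂ hy, hf₂.1]
          · simpa [hxT] using congrFun h x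
    _ ≤ df (#(s ∪ s.image f₀)ᶜ - 1) := card_matchingsOn_le _

theorem card_compl_union_image {s : Finset α} {f : α → α} (hf : Injective f)
    (hs : ∀ x ∈ s, f x ∉ s) : #(s ∪ s.image f)ᶜ = #sᶜ - #s := by
  rw [card_compl, card_compl, card_union_of_disjoint, card_image_of_injective _ hf]
  · omega
  · exact disjoint_left.2 fun x hx hxf => by
      obtain ⟨y, hy, rfl⟩ := mem_image.1 hxf
      exact hs y hy hx

end Matchings

theorem constrained_matchings_bound_general {α : Type*} [Fintype α] [DecidableEq α]
    (Neg Pos : Finset α) (Dist : Finset α) (N M L : ℕ)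
    (hdisj : Disjoint Neg Pos) (hcover : Neg ∪ Pos = Finset.univ)
    (hDist : Dist ⊆ Pos) (hN : Neg.card = N) (hM : Pos.card = M) (hL : Dist.card = L) :
    ((Finset.univ : Finset (α → α)).filter
        (fun f => IsPM f ∧ (∀ a ∈ Neg, f a ∈ Pos) ∧ (∀ a ∈ Dist, f a ∈ Neg))).card
      ≤ (M - L).choose (N - L) * Nat.factorial N * df (M - N - 1) := by
  obtain rfl : Pos = Negᶜ := (isCompl_iff.2 ⟨hdisj, codisjoint_iff.2 hcover⟩).compl_eq.symm
  set S := (Finset.univ : Finset (α → α)).filter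
    (fun f => IsPM f ∧ (∀ a ∈ Neg, f a ∈ Negᶜ) ∧ (∀ a ∈ Dist, f a ∈ Neg))
  have hmem : ∀ f ∈ S, IsPM f ∧ (∀ a ∈ Neg, f a ∉ Neg) ∧ ∀ a ∈ Dist, f a ∈ Neg := by
    intro f hf
    simpa [S] using hf
  have hfiber : ∀ r ∈ S.image Neg.restrict, #{f ∈ S | Neg.restrict f = r} ≤ df (M - N - 1) := by
    intro r hr
    obtain ⟨f₀, hf₀, rfl⟩ := mem_image.1 hr
    obtain ⟨hpm, hneg, -⟩ := hmem f₀ hf₀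
    calc #{f ∈ S | Neg.restrict f = Neg.restrict f₀}
        ≤ #{f : α → α | IsPM f ∧ Set.EqOn f f₀ Neg} := card_le_card fun f hf => by
          obtain ⟨hf, hfr⟩ := mem_filter.1 hf
          exact mem_filter.2 ⟨mem_univ _, (hmem f hf).1, fun x hx => congrFun hfr ⟨x, hx⟩⟩
      _ ≤ df (M - N - 1) := by
          have := card_filter_isPM_eqOn_le Neg f₀
          rwa [card_compl_union_image hpm.1.injective hneg, hN, hM] at this
  calc #S ≤ df (M - N - 1) * #(S.image Neg.restrict) := card_le_mul_card_image _ _ hfiber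
    _ ≤ df (M - N - 1) * ((M - L).choose (N - L) * N.factorial) := by
        gcongr
        rw [← hN, ← hM, ← hL]
        refine card_injective_covering_le hDist _ fun r hr => ?_
        obtain ⟨f, hf, rfl⟩ := mem_image.1 hr
        obtain ⟨hpm, hneg, hdist⟩ := hmem f hf
        refine ⟨hpm.1.injective.comp Subtype.val_injective, fun x => mem_compl.2 (hneg x x.2),
          fun d hd => mem_image.2 ⟨⟨f d, hdist d hd⟩, mem_univ _, hpm.1 d⟩⟩
    _ = _ := by ring

/-- The number of perfect matchings on `N + M` points (`N` negative, `M` positive,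
with `L` distinguished positive points) in which every negative point is matched
to a positive point and every distinguished positive point to a negative point is
at most `C(M-L, N-L) · N! · (M-N-1)!!`. -/
theorem constrained_matchings_bound {α : Type*} [Fintype α] [DecidableEq α]
    (Neg Pos : Finset α) (Dist : Finset α) (N M L : ℕ)
    (hdisj : Disjoint Neg Pos) (hcover : Neg ∪ Pos = Finset.univ)
    (hDist : Dist ⊆ Pos) (hN : Neg.card = N) (hM : Pos.card = M) (hL : Dist.card = L)
    (hLN : L ≤ N) (hNM : N ≤ M) (heven : Even (N + M)) (heven' : Even (M - N)) :
    ((Finset.univ : Finset (α → α)).filter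
        (fun f => IsPM f ∧ (∀ a ∈ Neg, f a ∈ Pos) ∧ (∀ a ∈ Dist, f a ∈ Neg))).card
      ≤ (M - L).choose (N - L) * Nat.factorial N * df (M - N - 1) :=
  constrained_matchings_bound_general Neg Pos Dist N M L hdisj hcover hDist hN hM hL
end

section
/- Suppose two 2-SAT formulas F₁ and F₂ have the same number of clauses, the same number of underlying variables, and every underlying variable appears at least once positively and at least once negatively in each. If F₁ and F₂ have the same set of underlying variables, then the map sending a formula G whose pure-literal-algorithm core is F₁ to the formula obtained from G by replacing the clauses of F₁ by the clauses of F₂ is a bijection onto the set of formulas whose core is F₂, and it preserves the total number of clauses. -/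
open Classical

/-- A literal over variables `V`. -/
abbrev Lit (V : Type*) := V × Bool

/-- A 2-clause. -/
abbrev Clause2 (V : Type*) := Lit V × Lit V

/-- A literal occurs in a formula. -/
def occursLit {V : Type*} (l : Lit V) (F : Finset (Clause2 V)) : Prop :=
  ∃ c ∈ F, c.1 = l ∨ c.2 = l

/-- A subformula is closed if it has no pure literal: every literal occurring in
it has its negation also occurring in it. -/
def Closed {V : Type*} (S : Finset (Clause2 V)) : Prop :=
  ∀ v : V, ∀ bb : Bool, occursLit (v, bb) S → occursLit (v, !bb) S

/-- The core of a formula w.r.t. the pure literal algorithm: the (unique) maximal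
closed subformula, i.e. the union of all closed subformulas. -/
noncomputable def core {V : Type*} [DecidableEq V] (G : Finset (Clause2 V)) :
    Finset (Clause2 V) :=
  (G.powerset.filter Closed).sup id

lemma occursLit_mono {V : Type*} {l : Lit V} {A B : Finset (Clause2 V)} (h : A ⊆ B)
    (ha : occursLit l A) : occursLit l B := by
  obtain ⟨c, hc, h2⟩ := ha; exact ⟨c, h hc, h2⟩

lemma occVar_of_occursLit {V : Type*} {v : V} {bb : Bool} {A : Finset (Clause2 V)}
    (h : occursLit (v, bb) A) :
    occursLit (v, true) A ∨ occursLit (v, false) A := by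
  cases bb
  · exact Or.inr h
  · exact Or.inl h

lemma core_subset {V : Type*} [DecidableEq V] (G : Finset (Clause2 V)) : core G ⊆ G := by
  intro c hc
  rw [core, Finset.mem_sup] at hc
  obtain ⟨S, hS, hcS⟩ := hc
  simp only [Finset.mem_filter, Finset.mem_powerset] at hS
  exact hS.1 hcS

lemma subset_core {V : Type*} [DecidableEq V] {G S : Finset (Clause2 V)}
    (h1 : S ⊆ G) (h2 : Closed S) : S ⊆ core G := by
  intro c hc
  rw [core, Finset.mem_sup]
  exact ⟨S, by simp [Finset.mem_filter, Finset.mem_powerset, h1, h2], hc⟩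

lemma core_le {V : Type*} [DecidableEq V] {G F : Finset (Clause2 V)}
    (h : ∀ S ⊆ G, Closed S → S ⊆ F) : core G ⊆ F := by
  intro c hc
  rw [core, Finset.mem_sup] at hc
  obtain ⟨S, hS, hcS⟩ := hc
  simp only [Finset.mem_filter, Finset.mem_powerset] at hS
  exact h S hS.1 hS.2 hcS

lemma key {V : Type*} [DecidableEq V] {F₁ F₂ : Finset (Clause2 V)}
    (hvars : ∀ v : V, (occursLit (v, true) F₁ ∨ occursLit (v, false) F₁) ↔
                      (occursLit (v, true) F₂ ∨ occursLit (v, false) F₂))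
    (htype₁ : ∀ v : V, (occursLit (v, true) F₁ ∨ occursLit (v, false) F₁) →
      occursLit (v, true) F₁ ∧ occursLit (v, false) F₁)
    (htype₂ : ∀ v : V, (occursLit (v, true) F₂ ∨ occursLit (v, false) F₂) →
      occursLit (v, true) F₂ ∧ occursLit (v, false) F₂)
    {G : Finset (Clause2 V)} (hG : core G = F₁) :
    Disjoint F₂ (G \ F₁) ∧ core ((G \ F₁) ∪ F₂) = F₂ := by
  have hF₁G : F₁ ⊆ G := hG ▸ core_subset G
  have hC₁ : Closed F₁ := by
    intro v bb h
    have := htype₁ v (occVar_of_occursLit h)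
    cases bb
    · exact this.1
    · exact this.2
  have hC₂ : Closed F₂ := by
    intro v bb h
    have := htype₂ v (occVar_of_occursLit h)
    cases bb
    · exact this.1
    · exact this.2
  have hmax : ∀ S ⊆ G, Closed S → S ⊆ F₁ := fun S h1 h2 => hG ▸ subset_core h1 h2
  -- any literal occurring in F₂ has its negation occurring in F₁
  have hneg : ∀ (v : V) (bb : Bool), occursLit (v, bb) F₂ → occursLit (v, !bb) F₁ := by
    intro v bb h
    have h2 := (hvars v).mpr (occVar_of_occursLit h)
    have := htype₁ v h2
    cases bb
    · exact this.1
    · exact this.2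
  have hdisj : Disjoint F₂ (G \ F₁) := by
    rw [Finset.disjoint_left]
    intro c hc2 hcG
    rw [Finset.mem_sdiff] at hcG
    -- insert c F₁ is closed and ⊆ G
    have hclosed : Closed (insert c F₁) := by
      intro v bb h
      obtain ⟨d, hd, hor⟩ := h
      rw [Finset.mem_insert] at hd
      rcases hd with rfl | hd
      · -- (v,bb) is a literal of c ∈ F₂
        have : occursLit (v, bb) F₂ := ⟨d, hc2, hor⟩
        exact occursLit_mono (Finset.subset_insert _ _) (hneg v bb this)
      · exact occursLit_mono (Finset.subset_insert _ _) (hC₁ v bb ⟨d, hd, hor⟩)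
    have hsub : insert c F₁ ⊆ G := Finset.insert_subset hcG.1 hF₁G
    exact hcG.2 (hmax _ hsub hclosed (Finset.mem_insert_self c F₁))
  refine ⟨hdisj, ?_⟩
  apply Finset.Subset.antisymm
  · apply core_le
    intro S hS hSc
    -- show S ⊆ F₂
    intro c hcS
    by_contra hc2
    -- S \ F₂ ∪ F₁ is closed ⊆ G
    have hS' : (S \ F₂) ∪ F₁ ⊆ G := by
      intro d hd
      rw [Finset.mem_union, Finset.mem_sdiff] at hd
      rcases hd with ⟨hd1, hd2⟩ | hd
      · have := hS hd1
        rw [Finset.mem_union, Finset.mem_sdiff] at this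
        rcases this with ⟨h, _⟩ | h
        · exact h
        · exact absurd h hd2
      · exact hF₁G hd
    have hclosed : Closed ((S \ F₂) ∪ F₁) := by
      intro v bb h
      obtain ⟨d, hd, hor⟩ := h
      rw [Finset.mem_union, Finset.mem_sdiff] at hd
      rcases hd with ⟨hd1, hd2⟩ | hd
      · -- occurs in S
        obtain ⟨e, he, heor⟩ := hSc v bb ⟨d, hd1, hor⟩
        by_cases he2 : e ∈ F₂
        · have : occursLit (v, !bb) F₂ := ⟨e, he2, heor⟩
          have h3 := htype₁ v ((hvars v).mpr (occVar_of_occursLit this))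
          have : occursLit (v, !bb) F₁ := by
            cases bb
            · exact h3.1
            · exact h3.2
          exact occursLit_mono Finset.subset_union_right this
        · exact ⟨e, Finset.mem_union_left _ (Finset.mem_sdiff.mpr ⟨he, he2⟩), heor⟩
      · exact occursLit_mono Finset.subset_union_right (hC₁ v bb ⟨d, hd, hor⟩)
    have hsub := hmax _ hS' hclosed
    have hcF₁ : c ∈ F₁ := hsub (Finset.mem_union_left _ (Finset.mem_sdiff.mpr ⟨hcS, hc2⟩))
    have := hS hcS
    rw [Finset.mem_union, Finset.mem_sdiff] at this
    rcases this with ⟨_, h⟩ | h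
    · exact h hcF₁
    · exact hc2 h
  · exact subset_core Finset.subset_union_right hC₂

/-- Replacing the clauses of the core `F₁` by those of `F₂` is a clause-number
preserving bijection between formulas with core `F₁` and formulas with core `F₂`. -/
theorem core_exchange_bijection {V : Type*} [DecidableEq V]
    (F₁ F₂ : Finset (Clause2 V))
    (hcard : F₁.card = F₂.card)
    (hvars : ∀ v : V, (occursLit (v, true) F₁ ∨ occursLit (v, false) F₁) ↔
                      (occursLit (v, true) F₂ ∨ occursLit (v, false) F₂))
    (htype₁ : ∀ v : V, (occursLit (v, true) F₁ ∨ occursLit (v, false) F₁) →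
      occursLit (v, true) F₁ ∧ occursLit (v, false) F₁)
    (htype₂ : ∀ v : V, (occursLit (v, true) F₂ ∨ occursLit (v, false) F₂) →
      occursLit (v, true) F₂ ∧ occursLit (v, false) F₂) :
    Set.BijOn (fun G => (G \ F₁) ∪ F₂)
      {G : Finset (Clause2 V) | core G = F₁} {G : Finset (Clause2 V) | core G = F₂} ∧
    ∀ G : Finset (Clause2 V), core G = F₁ → ((G \ F₁) ∪ F₂).card = G.card := by
  have hvars' : ∀ v : V, (occursLit (v, true) F₂ ∨ occursLit (v, false) F₂) ↔
      (occursLit (v, true) F₁ ∨ occursLit (v, false) F₁) := fun v => (hvars v).symm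
  have key₁₂ := fun {G} (hG : core G = F₁) => key hvars htype₁ htype₂ hG
  have key₂₁ := fun {G} (hG : core G = F₂) => key hvars' htype₂ htype₁ hG
  have hinv₁ : ∀ G : Finset (Clause2 V), core G = F₁ →
      (((G \ F₁) ∪ F₂) \ F₂) ∪ F₁ = G := by
    intro G hG
    have hdisj := (key₁₂ hG).1
    have hF₁G : F₁ ⊆ G := hG ▸ core_subset G
    ext c
    rw [Finset.disjoint_left] at hdisj
    simp only [Finset.mem_union, Finset.mem_sdiff]
    constructor
    · rintro (⟨(⟨h1, h2⟩ | h1), h3⟩ | h1)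
      · exact h1
      · exact absurd h1 h3
      · exact hF₁G h1
    · intro hc
      by_cases h1 : c ∈ F₁
      · exact Or.inr h1
      · refine Or.inl ⟨Or.inl ⟨hc, h1⟩, fun h2 => hdisj h2 (Finset.mem_sdiff.mpr ⟨hc, h1⟩)⟩
  have hinv₂ : ∀ G : Finset (Clause2 V), core G = F₂ →
      (((G \ F₂) ∪ F₁) \ F₁) ∪ F₂ = G := by
    intro G hG
    have hdisj := (key₂₁ hG).1
    have hF₂G : F₂ ⊆ G := hG ▸ core_subset G
    ext c
    rw [Finset.disjoint_left] at hdisj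
    simp only [Finset.mem_union, Finset.mem_sdiff]
    constructor
    · rintro (⟨(⟨h1, h2⟩ | h1), h3⟩ | h1)
      · exact h1
      · exact absurd h1 h3
      · exact hF₂G h1
    · intro hc
      by_cases h1 : c ∈ F₂
      · exact Or.inr h1
      · refine Or.inl ⟨Or.inl ⟨hc, h1⟩, fun h2 => hdisj h2 (Finset.mem_sdiff.mpr ⟨hc, h1⟩)⟩
  constructor
  · have hL : Set.LeftInvOn (fun G => (G \ F₂) ∪ F₁) (fun G => (G \ F₁) ∪ F₂)
        {G : Finset (Clause2 V) | core G = F₁} := fun G hG => hinv₁ G hG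
    have hR : Set.LeftInvOn (fun G => (G \ F₁) ∪ F₂) (fun G => (G \ F₂) ∪ F₁)
        {G : Finset (Clause2 V) | core G = F₂} := fun G hG => hinv₂ G hG
    have hM₁ : Set.MapsTo (fun G => (G \ F₁) ∪ F₂)
        {G : Finset (Clause2 V) | core G = F₁} {G : Finset (Clause2 V) | core G = F₂} :=
      fun G hG => (key₁₂ hG).2
    have hM₂ : Set.MapsTo (fun G => (G \ F₂) ∪ F₁)
        {G : Finset (Clause2 V) | core G = F₂} {G : Finset (Clause2 V) | core G = F₁} :=
      fun G hG => (key₂₁ hG).2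
    exact ⟨hM₁, hL.injOn, hR.surjOn hM₂⟩
  · intro G hG
    have hdisj := (key₁₂ hG).1
    have hF₁G : F₁ ⊆ G := hG ▸ core_subset G
    rw [Finset.card_union_of_disjoint hdisj.symm, Finset.card_sdiff_of_subset hF₁G]
    have := Finset.card_le_card hF₁G
    omega
end
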